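/- Let p be even and let α_0,…,α_{p-2} ∈ 𝔻, α_{p-1} = (1+a)/(1+conj(a)) for some a ∈ 𝔻 (so |α_{p-1}| = 1). Then the finite CMV matrix C built from α_0,…,α_{p-1} satisfies: its characteristic polynomial det(z·I - C) equals the monic polynomial Φ̃_p(z) = z Φ_{p-1}(z) - conj(α_{p-1}) Φ*_{p-1}(z), where Φ_{p-1} is the (p-1)-st monic Szegő polynomial for α_0,…,α_{p-2}. -/

import Mathlib

/-!
`L` is the direct sum of the `2 × 2` unitaries `Θ_{2k}`, so `L Lᴴ = 1`, `det L = (-1)^(p/2)` and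
`z - LM = L (z Lᴴ - M)`. The pencil `z Lᴴ - M` is tridiagonal, so its leading principal minors obey
the three-term recursion of continuants. Because `ρ_j² = 1 - |α_j|²`, two steps of that recursion
are exactly the Szegő recursion together with its reversed form
`Φ*_{k+1} = Φ*_k - α_k z Φ_k`: the minor of size `2k` is `(-1)^k Φ_{2k}` and the minor of size
`2k + 1` is `(-1)^(k+1) Φ*_{2k+1}`.
-/

open Polynomial

/-- `ρ = √(1 - |α|²)`. -/
noncomputable def rho (a : ℂ) : ℝ := Real.sqrt (1 - ‖a‖ ^ 2)

/-- The reversed polynomial at degree `k`. -/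
noncomputable def rev (k : ℕ) (P : Polynomial ℂ) : Polynomial ℂ :=
  Polynomial.reflect k (P.map (starRingEnd ℂ))

/-- The monic Szegő orthogonal polynomials. -/
noncomputable def szego (α : ℕ → ℂ) : ℕ → Polynomial ℂ
  | 0 => 1
  | k + 1 => X * szego α k - Polynomial.C ((starRingEnd ℂ) (α k)) * rev k (szego α k)

/-- `L = Θ_0 ⊕ Θ_2 ⊕ … ⊕ Θ_{p-2}` (for `p` even). -/
noncomputable def Lmat (n : ℕ) (α : ℕ → ℂ) : Matrix (Fin n) (Fin n) ℂ :=
  Matrix.of fun i j =>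
    if i.val % 2 = 0 then
      if j.val = i.val then (starRingEnd ℂ) (α i.val)
      else if j.val = i.val + 1 then (rho (α i.val) : ℂ) else 0
    else
      if j.val = i.val then -α (i.val - 1)
      else if j.val + 1 = i.val then (rho (α (i.val - 1)) : ℂ) else 0

/-- `M = [1] ⊕ Θ_1 ⊕ … ⊕ Θ_{n-3} ⊕ [conj α_{n-1}]` (for `n` even). -/
noncomputable def Mmat (n : ℕ) (α : ℕ → ℂ) : Matrix (Fin n) (Fin n) ℂ :=
  Matrix.of fun i j =>
    if i.val = 0 then (if j.val = 0 then 1 else 0)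
    else if i.val = n - 1 then (if j.val = n - 1 then (starRingEnd ℂ) (α (n - 1)) else 0)
    else if i.val % 2 = 1 then
      if j.val = i.val then (starRingEnd ℂ) (α i.val)
      else if j.val = i.val + 1 then (rho (α i.val) : ℂ) else 0
    else
      if j.val = i.val then -α (i.val - 1)
      else if j.val + 1 = i.val then (rho (α (i.val - 1)) : ℂ) else 0

open Matrix

namespace Matrix

variable {R : Type*} [CommRing R]

theorem det_succ_of_last_column_eq_zero {n : ℕ} (A : Matrix (Fin (n + 1)) (Fin (n + 1)) R)
    (h : ∀ i : Fin n, A i.castSucc (Fin.last n) = 0) :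
    A.det = A (Fin.last n) (Fin.last n) * (A.submatrix Fin.castSucc Fin.castSucc).det := by
  rw [det_succ_column A (Fin.last n), Fin.sum_univ_castSucc,
    Finset.sum_eq_zero fun i _ => by rw [h i, mul_zero, zero_mul], zero_add,
    Fin.succAbove_last, ← two_mul, pow_mul]
  simp

def tridiagonal (d u l : ℕ → R) (n : ℕ) : Matrix (Fin n) (Fin n) R :=
  of fun i j =>
    if i.val = j.val then d i
    else if i.val + 1 = j.val then u i
    else if j.val + 1 = i.val then l j else 0

@[simp]
theorem tridiagonal_apply (d u l : ℕ → R) (n : ℕ) (i j : Fin n) :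
    tridiagonal d u l n i j =
      if i.val = j.val then d i
      else if i.val + 1 = j.val then u i
      else if j.val + 1 = i.val then l j else 0 :=
  rfl

theorem tridiagonal_submatrix_castSucc (d u l : ℕ → R) (n : ℕ) :
    (tridiagonal d u l (n + 1)).submatrix Fin.castSucc Fin.castSucc = tridiagonal d u l n := by
  ext i j
  simp

theorem det_tridiagonal_succ_succ (d u l : ℕ → R) (n : ℕ) :
    (tridiagonal d u l (n + 2)).det =
      d (n + 1) * (tridiagonal d u l (n + 1)).det - u n * l n * (tridiagonal d u l n).det := by
  set T := tridiagonal d u l (n + 2)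
  have hrow (j : Fin n) : T (Fin.last (n + 1)) j.castSucc.castSucc = 0 := by
    have := j.isLt
    simp only [T, tridiagonal_apply, Fin.val_last, Fin.val_castSucc]
    split_ifs <;> first | rfl | omega
  have hminor : (T.submatrix (Fin.last (n + 1)).succAbove (Fin.last n).castSucc.succAbove).det =
      u n * (tridiagonal d u l n).det := by
    rw [det_succ_of_last_column_eq_zero]
    · have hcorner : T.submatrix (Fin.last (n + 1)).succAbove (Fin.last n).castSucc.succAbove
          (Fin.last n) (Fin.last n) = u n := by
        simp [T]
      have hsub : (T.submatrix (Fin.last (n + 1)).succAbove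
          (Fin.last n).castSucc.succAbove).submatrix Fin.castSucc Fin.castSucc =
            tridiagonal d u l n := by
        ext i j
        simp [T]
      rw [hcorner, hsub]
    · intro i
      have := i.isLt
      simp only [submatrix_apply, Fin.succAbove_last, Fin.succAbove_castSucc_self, Fin.succ_last,
        T, tridiagonal_apply, Fin.val_last, Fin.val_castSucc]
      split_ifs <;> first | rfl | omega
  rw [det_succ_row T (Fin.last (n + 1)), Fin.sum_univ_castSucc, Fin.sum_univ_castSucc,
    Finset.sum_eq_zero fun j _ => by rw [hrow j, mul_zero, zero_mul], zero_add, hminor,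
    Fin.succAbove_last, tridiagonal_submatrix_castSucc]
  have hsub : T (Fin.last (n + 1)) (Fin.last n).castSucc = l n := by
    simp [T, show n + 1 + 1 ≠ n by omega]
  have hdiag : T (Fin.last (n + 1)) (Fin.last (n + 1)) = d (n + 1) := by simp [T]
  rw [hsub, hdiag, Fin.val_last, Fin.val_castSucc, Fin.val_last, ← two_mul,
    show n + 1 + n = 2 * n + 1 by ring, pow_succ, pow_mul, pow_mul, neg_one_sq, one_pow, one_pow]
  ring

end Matrix

lemma natDegree_rev_le {k : ℕ} {P : ℂ[X]} (h : P.natDegree ≤ k) : (rev k P).natDegree ≤ k :=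
  natDegree_reflect_le.trans (max_le le_rfl (natDegree_map_le.trans h))

lemma rev_rev (k : ℕ) (P : ℂ[X]) : rev k (rev k P) = P := by
  simp [rev, ← reflect_map, Polynomial.map_map]

lemma rev_sub (k : ℕ) (P Q : ℂ[X]) : rev k (P - Q) = rev k P - rev k Q := by
  simp [rev, reflect_sub]

lemma rev_C_mul (k : ℕ) (c : ℂ) (P : ℂ[X]) :
    rev k (C c * P) = C (starRingEnd ℂ c) * rev k P := by
  simp [rev, reflect_C_mul]

lemma rev_succ_X_mul {k : ℕ} {P : ℂ[X]} (h : P.natDegree ≤ k) :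
    rev (k + 1) (X * P) = rev k P := by
  rw [rev, Polynomial.map_mul, map_X, add_comm,
    reflect_mul _ _ natDegree_X_le (natDegree_map_le.trans h), reflect_one_X, one_mul, rev]

lemma rev_succ_of_natDegree_le {k : ℕ} {P : ℂ[X]} (h : P.natDegree ≤ k) :
    rev (k + 1) P = X * rev k P := by
  rw [rev, ← one_mul (P.map _), add_comm, reflect_mul _ _ (natDegree_one.trans_le zero_le_one)
    (natDegree_map_le.trans h), reflect_one, pow_one, rev]

lemma rev_szego_step {k : ℕ} {P : ℂ[X]} (h : P.natDegree ≤ k) (c : ℂ) :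
    rev (k + 1) (X * P - C (starRingEnd ℂ c) * rev k P) = rev k P - C c * (X * P) := by
  rw [rev_sub, rev_C_mul, rev_succ_X_mul h, rev_succ_of_natDegree_le (natDegree_rev_le h),
    rev_rev, Complex.conj_conj]

lemma szego_succ (α : ℕ → ℂ) (k : ℕ) :
    szego α (k + 1) = X * szego α k - C (starRingEnd ℂ (α k)) * rev k (szego α k) :=
  rfl

lemma natDegree_szego_le (α : ℕ → ℂ) (k : ℕ) : (szego α k).natDegree ≤ k := by
  induction k with
  | zero => simp [szego]
  | succ k ih =>
    refine (natDegree_sub_le _ _).trans (max_le ?_ ?_)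
    · exact natDegree_mul_le.trans (by rw [natDegree_X]; omega)
    · exact (natDegree_C_mul_le _ _).trans ((natDegree_rev_le ih).trans k.le_succ)

lemma rev_szego_succ (α : ℕ → ℂ) (k : ℕ) :
    rev (k + 1) (szego α (k + 1)) = rev k (szego α k) - C (α k) * (X * szego α k) :=
  rev_szego_step (natDegree_szego_le α k) (α k)

lemma ofReal_rho_sq {a : ℂ} (h : ‖a‖ ≤ 1) : (rho a : ℂ) ^ 2 = 1 - starRingEnd ℂ a * a := by
  have h0 : (0 : ℝ) ≤ 1 - ‖a‖ ^ 2 := by nlinarith [norm_nonneg a]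
  rw [← Complex.ofReal_pow, rho, Real.sq_sqrt h0, mul_comm, Complex.mul_conj,
    Complex.normSq_eq_norm_sq]
  push_cast
  ring

lemma C_ofReal_rho_sq {a : ℂ} (h : ‖a‖ ≤ 1) :
    C (rho a : ℂ) ^ 2 = 1 - C (starRingEnd ℂ a) * C a := by
  rw [← map_pow, ofReal_rho_sq h, map_sub, map_one, map_mul]

noncomputable def theta (a : ℂ) : Matrix (Fin 2) (Fin 2) ℂ :=
  !![starRingEnd ℂ a, (rho a : ℂ); (rho a : ℂ), -a]

lemma theta_mul_conjTranspose {a : ℂ} (h : ‖a‖ ≤ 1) : theta a * (theta a)ᴴ = 1 := by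
  have hρ := ofReal_rho_sq h
  ext i j
  fin_cases i <;> fin_cases j <;>
    simp [theta, Matrix.mul_apply, Fin.sum_univ_two, Complex.conj_ofReal] <;>
    first | ring1 | linear_combination hρ

lemma det_theta {a : ℂ} (h : ‖a‖ ≤ 1) : (theta a).det = -1 := by
  rw [theta, det_fin_two_of]
  linear_combination -ofReal_rho_sq h

def blockIndex (m : ℕ) : Fin 2 × Fin m ≃ Fin (2 * m) :=
  (Equiv.prodComm _ _).trans (finProdFinEquiv.trans (finCongr (Nat.mul_comm m 2)))

@[simp]
lemma blockIndex_apply_val (m : ℕ) (x : Fin 2 × Fin m) :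
    (blockIndex m x).val = x.1 + 2 * x.2 :=
  rfl

lemma Lmat_eq_reindex_blockDiagonal (m : ℕ) (α : ℕ → ℂ) :
    Lmat (2 * m) α =
      reindex (blockIndex m) (blockIndex m) (blockDiagonal fun k : Fin m => theta (α (2 * k))) := by
  ext i j
  obtain ⟨⟨r, k⟩, rfl⟩ := (blockIndex m).surjective i
  obtain ⟨⟨s, l⟩, rfl⟩ := (blockIndex m).surjective j
  simp only [reindex_apply, submatrix_apply, Equiv.symm_apply_apply, blockDiagonal_apply, Lmat,
    of_apply, blockIndex_apply_val]
  fin_cases r <;> fin_cases s <;> simp [theta, Fin.ext_iff] <;>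
    split_ifs <;> first | rfl | omega

lemma Lmat_mul_conjTranspose {m : ℕ} {α : ℕ → ℂ} (hα : ∀ k < m, ‖α (2 * k)‖ ≤ 1) :
    Lmat (2 * m) α * (Lmat (2 * m) α)ᴴ = 1 := by
  rw [Lmat_eq_reindex_blockDiagonal, conjTranspose_reindex, reindex_apply, reindex_apply,
    submatrix_mul_equiv, blockDiagonal_conjTranspose, ← blockDiagonal_mul]
  simp only [theta_mul_conjTranspose (hα _ (Fin.is_lt _))]
  rw [← Pi.one_def, blockDiagonal_one, submatrix_one_equiv]

lemma det_Lmat {m : ℕ} {α : ℕ → ℂ} (hα : ∀ k < m, ‖α (2 * k)‖ ≤ 1) :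
    (Lmat (2 * m) α).det = (-1) ^ m := by
  rw [Lmat_eq_reindex_blockDiagonal, det_reindex_self, det_blockDiagonal]
  simp [det_theta (hα _ (Fin.is_lt _))]

/-- The diagonal of `X • Lᴴ - M`; the case `i = 0` is the even formula with `α_{-1} = -1`. -/
noncomputable def pencilDiag (α : ℕ → ℂ) (i : ℕ) : ℂ[X] :=
  if i = 0 then X * C (α 0) - 1
  else if i % 2 = 0 then X * C (α i) + C (α (i - 1))
  else -(X * C (starRingEnd ℂ (α (i - 1)))) - C (starRingEnd ℂ (α i))

noncomputable def pencilOffDiag (α : ℕ → ℂ) (i : ℕ) : ℂ[X] :=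
  if i % 2 = 0 then X * C (rho (α i) : ℂ) else -C (rho (α i) : ℂ)

noncomputable abbrev pencil (α : ℕ → ℂ) (n : ℕ) : Matrix (Fin n) (Fin n) ℂ[X] :=
  tridiagonal (pencilDiag α) (pencilOffDiag α) (pencilOffDiag α) n

lemma X_smul_conjTranspose_Lmat_sub_Mmat (m : ℕ) (α : ℕ → ℂ) :
    (X : ℂ[X]) • (Lmat (2 * m) α)ᴴ.map C - (Mmat (2 * m) α).map C = pencil α (2 * m) := by
  refine Matrix.ext fun ⟨a, ha⟩ ⟨b, hb⟩ => ?_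
  simp only [Matrix.sub_apply, Matrix.smul_apply, Matrix.map_apply, Matrix.conjTranspose_apply,
    tridiagonal_apply, Lmat, Mmat, Matrix.of_apply, pencilDiag, pencilOffDiag, smul_eq_mul]
  split_ifs <;> subst_vars <;> first | omega | simp

lemma pencilDiag_odd (α : ℕ → ℂ) (k : ℕ) :
    pencilDiag α (2 * k + 1) =
      -(X * C (starRingEnd ℂ (α (2 * k)))) - C (starRingEnd ℂ (α (2 * k + 1))) := by
  simp [pencilDiag]

lemma pencilDiag_even_succ (α : ℕ → ℂ) (k : ℕ) :
    pencilDiag α (2 * k + 2) = X * C (α (2 * k + 2)) + C (α (2 * k + 1)) := by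
  simp [pencilDiag]

lemma pencilOffDiag_even_mul_self {α : ℕ → ℂ} {k : ℕ} (h : ‖α (2 * k)‖ ≤ 1) :
    pencilOffDiag α (2 * k) * pencilOffDiag α (2 * k) =
      X ^ 2 * (1 - C (starRingEnd ℂ (α (2 * k))) * C (α (2 * k))) := by
  rw [pencilOffDiag, if_pos (by omega)]
  linear_combination X ^ 2 * C_ofReal_rho_sq h

lemma pencilOffDiag_odd_mul_self {α : ℕ → ℂ} {k : ℕ} (h : ‖α (2 * k + 1)‖ ≤ 1) :
    pencilOffDiag α (2 * k + 1) * pencilOffDiag α (2 * k + 1) =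
      1 - C (starRingEnd ℂ (α (2 * k + 1))) * C (α (2 * k + 1)) := by
  rw [pencilOffDiag, if_neg (by omega)]
  linear_combination C_ofReal_rho_sq h

section

variable (α : ℕ → ℂ) {k : ℕ}

lemma det_pencil_even_succ (hE : (pencil α (2 * k)).det = (-1) ^ k * szego α (2 * k))
    (hO : (pencil α (2 * k + 1)).det = (-1) ^ (k + 1) * rev (2 * k + 1) (szego α (2 * k + 1)))
    (h : ‖α (2 * k)‖ ≤ 1) :
    (pencil α (2 * k + 2)).det = (-1) ^ (k + 1) * szego α (2 * k + 2) := by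
  rw [det_tridiagonal_succ_succ, hE, hO, pencilDiag_odd, pencilOffDiag_even_mul_self h,
    szego_succ α (2 * k + 1), rev_szego_succ α (2 * k), szego_succ α (2 * k)]
  ring

lemma det_pencil_odd_succ
    (hO : (pencil α (2 * k + 1)).det = (-1) ^ (k + 1) * rev (2 * k + 1) (szego α (2 * k + 1)))
    (hE : (pencil α (2 * k + 2)).det = (-1) ^ (k + 1) * szego α (2 * k + 2))
    (h : ‖α (2 * k + 1)‖ ≤ 1) :
    (pencil α (2 * k + 3)).det = (-1) ^ (k + 2) * rev (2 * k + 3) (szego α (2 * k + 3)) := by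
  rw [det_tridiagonal_succ_succ, hE, hO, pencilDiag_even_succ, pencilOffDiag_odd_mul_self h,
    rev_szego_succ α (2 * k + 2), rev_szego_succ α (2 * k + 1), szego_succ α (2 * k + 1)]
  ring

lemma det_pencil_even_odd (k : ℕ) (hα : ∀ j < 2 * k, ‖α j‖ ≤ 1) :
    (pencil α (2 * k)).det = (-1) ^ k * szego α (2 * k) ∧
      (pencil α (2 * k + 1)).det = (-1) ^ (k + 1) * rev (2 * k + 1) (szego α (2 * k + 1)) := by
  induction k with
  | zero =>
    refine ⟨by simp [szego], ?_⟩
    rw [det_fin_one]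
    simp [pencilDiag, szego, rev]
  | succ k ih =>
    obtain ⟨hE, hO⟩ := ih fun j hj => hα j (by omega)
    have hE' := det_pencil_even_succ α hE hO (hα _ (by omega))
    exact ⟨hE', det_pencil_odd_succ α hO hE' (hα _ (by omega))⟩

end

lemma charmatrix_Lmat_mul_Mmat {m : ℕ} {α : ℕ → ℂ} (hα : ∀ k < m, ‖α (2 * k)‖ ≤ 1) :
    charmatrix (Lmat (2 * m) α * Mmat (2 * m) α) =
      (Lmat (2 * m) α).map C * pencil α (2 * m) := by
  rw [← X_smul_conjTranspose_Lmat_sub_Mmat, Matrix.mul_sub, Matrix.mul_smul, ← Matrix.map_mul,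
    ← Matrix.map_mul, Lmat_mul_conjTranspose hα, Matrix.map_one C (map_zero C) (map_one C),
    charmatrix, smul_one_eq_diagonal]
  rfl

theorem cmv_charpoly_general (p : ℕ) (hp : Even p) (hp2 : 2 ≤ p) (α : ℕ → ℂ)
    (hα : ∀ j < p - 1, ‖α j‖ < 1) :
    Matrix.charpoly (Lmat p α * Mmat p α) =
      X * szego α (p - 1) -
        Polynomial.C ((starRingEnd ℂ) (α (p - 1))) * rev (p - 1) (szego α (p - 1)) := by
  obtain ⟨k, rfl⟩ : ∃ k, p = 2 * (k + 1) := ⟨p / 2 - 1, by rcases hp with ⟨r, rfl⟩; omega⟩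
  have hα' (j : ℕ) (hj : j ≤ 2 * k) : ‖α j‖ ≤ 1 := (hα j (by omega)).le
  obtain ⟨hE, hO⟩ := det_pencil_even_odd α k fun j hj => hα' j hj.le
  have hpencil : (pencil α (2 * (k + 1))).det = (-1) ^ (k + 1) * szego α (2 * k + 2) :=
    det_pencil_even_succ α hE hO (hα' _ le_rfl)
  rw [charpoly, charmatrix_Lmat_mul_Mmat fun i hi => hα' _ (by omega), det_mul,
    ← RingHom.mapMatrix_apply, ← RingHom.map_det, det_Lmat fun i hi => hα' _ (by omega), hpencil,
    show 2 * (k + 1) - 1 = 2 * k + 1 by omega, szego_succ, map_pow, map_neg, map_one, ← mul_assoc,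
    ← pow_add, Even.neg_one_pow ⟨k + 1, rfl⟩, one_mul]

/-- The characteristic polynomial of the finite CMV matrix with coefficients
`α_0, …, α_{p-2} ∈ 𝔻` and `α_{p-1} = (1+a)/(1+conj a)` (`a ∈ 𝔻`, so
`|α_{p-1}| = 1`) is the monic polynomial
`Φ̃_p(z) = z Φ_{p-1}(z) - conj(α_{p-1}) Φ*_{p-1}(z)`. -/
theorem cmv_charpoly (p : ℕ) (hp : Even p) (hp2 : 2 ≤ p) (α : ℕ → ℂ)
    (hα : ∀ j < p - 1, ‖α j‖ < 1)
    (a : ℂ) (ha : ‖a‖ < 1)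
    (hlast : α (p - 1) = (1 + a) / (1 + (starRingEnd ℂ) a)) :
    Matrix.charpoly (Lmat p α * Mmat p α) =
      X * szego α (p - 1) -
        Polynomial.C ((starRingEnd ℂ) (α (p - 1))) * rev (p - 1) (szego α (p - 1)) :=
  cmv_charpoly_general p hp hp2 α hα
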